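/- Let g_1,...,g_n be F_q-linearly independent in F_{q^m} and r in F_{q^m}^n. A pair (f(x), g(x)) of q-linearized polynomials satisfies f(g_i) + g(r_i) = 0 for all i = 1,...,n if and only if there exist q-linearized polynomials beta(x), gamma(x) such that f(x) = beta(Pi_g(x)) - gamma(Lambda_{g,r}(x)) and g(x) = gamma(x), where Pi_g is the q-annihilator polynomial of span(g_1,...,g_n) and Lambda_{g,r} is the q-Lagrange polynomial interpolating r_i at g_i. -/

import Mathlib

/-! `φ = f + h ∘ Λ` is `q`-linearized and vanishes at every `g i`, hence on their `Fq`-span `V`.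
The subspace polynomial `Π_V = ∏_{u ∈ V} (X - u)` is itself `q`-linearized: adjoining `w ∉ V` gives
`Π_{V + Fq w} = (Y ^ q - Π_V(w) ^ (q - 1) Y) ∘ Π_V`. So right division by `Π_V` in the composition
ring of linearized polynomials leaves a remainder of degree `< |V|` vanishing on `V`, i.e. zero,
and `φ = β ∘ Π_V`. The converse is evaluation. -/

open Polynomial

/-- A `q`-linearized polynomial: all monomials have exponent a power of `q`. -/
def IsLin {F : Type*} [Field F] (q : ℕ) (f : Polynomial F) : Prop :=
  ∀ i ∈ f.support, ∃ j : ℕ, i = q ^ j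

section Linearized

variable {F : Type*} [Field F] {q : ℕ}

theorem isLin_zero : IsLin q (0 : F[X]) := by simp [IsLin]

theorem isLin_X : IsLin q (X : F[X]) := by
  intro i hi
  rw [support_X, Finset.mem_singleton] at hi
  exact ⟨0, by rw [hi, pow_zero]⟩

theorem isLin_C_mul_X_pow (c : F) (j : ℕ) : IsLin q (C c * X ^ q ^ j) :=
  fun _ hi => ⟨j, Finset.mem_singleton.1 (support_C_mul_X_pow_subset _ c hi)⟩

theorem IsLin.add {f g : F[X]} (hf : IsLin q f) (hg : IsLin q g) : IsLin q (f + g) := fun i hi =>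
  (Finset.mem_union.1 (support_add hi)).elim (hf i) (hg i)

theorem IsLin.neg {f : F[X]} (hf : IsLin q f) : IsLin q (-f) := by
  simpa [IsLin] using hf

theorem IsLin.sub {f g : F[X]} (hf : IsLin q f) (hg : IsLin q g) : IsLin q (f - g) := by
  simpa only [sub_eq_add_neg] using hf.add hg.neg

theorem IsLin.C_mul {f : F[X]} (c : F) (hf : IsLin q f) : IsLin q (C c * f) := fun i hi =>
  hf i (support_smul c f (by rwa [smul_eq_C_mul]))

theorem isLin_sum {ι : Type*} (s : Finset ι) {f : ι → F[X]} (hf : ∀ i ∈ s, IsLin q (f i)) :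
    IsLin q (∑ i ∈ s, f i) := by
  classical
  induction s using Finset.induction_on with
  | empty => simpa using isLin_zero
  | insert a s ha ih =>
    rw [Finset.sum_insert ha]
    exact (hf a (s.mem_insert_self a)).add (ih fun i hi => hf i (Finset.mem_insert_of_mem hi))

theorem isLin_X_pow_sub_C_mul_X (a : F) : IsLin q (X ^ q - C a * X) := by
  simpa using (isLin_C_mul_X_pow (1 : F) 1).sub (isLin_X.C_mul a)

theorem IsLin.eval_mul {f : F[X]} (hf : IsLin q f) {c : F} (hc : c ^ q = c) (x : F) :
    f.eval (c * x) = c * f.eval x := by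
  have hcj : ∀ j, c ^ q ^ j = c := fun j => by
    induction j with
    | zero => simp
    | succ j ih => rw [pow_succ, pow_mul, ih, hc]
  simp only [eval_eq_sum, Polynomial.sum, Finset.mul_sum]
  refine Finset.sum_congr rfl fun i hi => ?_
  obtain ⟨j, rfl⟩ := hf i hi
  rw [mul_pow, hcj]
  ring

variable {p k : ℕ} [ExpChar F p]

theorem IsLin.pow (hq : q = p ^ k) {f : F[X]} (hf : IsLin q f) (j : ℕ) : IsLin q (f ^ q ^ j) := by
  have hqj : q ^ j = p ^ (k * j) := by rw [hq, pow_mul]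
  rw [f.as_sum_support_C_mul_X_pow, hqj, sum_pow_char_pow, ← hqj]
  refine isLin_sum _ fun i hi => ?_
  obtain ⟨a, rfl⟩ := hf i hi
  rw [mul_pow, ← C_pow, ← pow_mul, ← pow_add]
  exact isLin_C_mul_X_pow _ _

theorem IsLin.comp (hq : q = p ^ k) {f g : F[X]} (hf : IsLin q f) (hg : IsLin q g) :
    IsLin q (f.comp g) := by
  rw [comp_eq_sum_left, Polynomial.sum]
  refine isLin_sum _ fun i hi => ?_
  obtain ⟨j, rfl⟩ := hf i hi
  exact (hg.pow hq j).C_mul _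

theorem IsLin.eval_add (hq : q = p ^ k) {f : F[X]} (hf : IsLin q f) (a b : F) :
    f.eval (a + b) = f.eval a + f.eval b := by
  simp only [eval_eq_sum, Polynomial.sum, ← Finset.sum_add_distrib]
  refine Finset.sum_congr rfl fun i hi => ?_
  obtain ⟨j, rfl⟩ := hf i hi
  rw [hq, ← pow_mul, add_pow_expChar_pow, mul_add]

theorem IsLin.eval_zero (hq : q = p ^ k) {f : F[X]} (hf : IsLin q f) : f.eval 0 = 0 := by
  simpa using hf.eval_add hq 0 0

theorem IsLin.exists_pow_isMonicOfDegree (hq1 : 1 < q) {P φ : F[X]} (hP : IsLin q P)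
    (hPm : P.Monic) (hφ : IsLin q φ) (hφ0 : φ ≠ 0) (hle : P.natDegree ≤ φ.natDegree) :
    ∃ e, IsMonicOfDegree (P ^ q ^ e) φ.natDegree := by
  obtain ⟨n, hn⟩ := hP _ (natDegree_mem_support_of_nonzero hPm.ne_zero)
  obtain ⟨m, hm⟩ := hφ _ (natDegree_mem_support_of_nonzero hφ0)
  have hnm : n ≤ m := (Nat.pow_le_pow_iff_right hq1).1 (hn ▸ hm ▸ hle)
  refine ⟨m - n, ?_⟩
  rw [hm, ← Nat.add_sub_cancel' hnm, pow_add, Nat.add_sub_cancel_left, ← hn]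
  exact IsMonicOfDegree.pow ⟨rfl, hPm⟩ _

theorem IsLin.exists_eq_comp_add (hq : q = p ^ k) (hq1 : 1 < q) {φ P : F[X]} (hφ : IsLin q φ)
    (hP : IsLin q P) (hPm : P.Monic) :
    ∃ β ρ : F[X], IsLin q β ∧ IsLin q ρ ∧ φ = β.comp P + ρ ∧ ρ.natDegree < P.natDegree := by
  induction hd : φ.natDegree using Nat.strong_induction_on generalizing φ with
  | _ d ih =>
  by_cases hlt : d < P.natDegree
  · exact ⟨0, φ, isLin_zero, hφ, by simp, hd ▸ hlt⟩
  have hP0 : 0 < P.natDegree := by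
    obtain ⟨n, hn⟩ := hP _ (natDegree_mem_support_of_nonzero hPm.ne_zero)
    rw [hn]
    positivity
  have hφ0 : φ ≠ 0 := by
    rintro rfl
    exact hlt (hd ▸ hP0)
  obtain ⟨e, hQ⟩ := hP.exists_pow_isMonicOfDegree hq1 hPm hφ hφ0 (by omega)
  set c := φ.leadingCoeff
  have hc : c ≠ 0 := leadingCoeff_ne_zero.2 hφ0
  have hφ' : IsLin q (φ - C c * P ^ q ^ e) := hφ.sub ((hP.pow hq e).C_mul c)
  have hlt' : (φ - C c * P ^ q ^ e).natDegree < d := by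
    rcases eq_or_ne (φ - C c * P ^ q ^ e) 0 with h0 | h0
    · rw [h0, natDegree_zero]
      omega
    rw [← hd]
    refine natDegree_lt_natDegree h0 (degree_sub_lt_left ?_ hφ0 ?_)
    · rw [degree_C_mul hc, degree_eq_natDegree hφ0, degree_eq_natDegree hQ.ne_zero,
        hQ.natDegree_eq]
    · rw [leadingCoeff_mul, leadingCoeff_C, hQ.monic.leadingCoeff, mul_one]
  obtain ⟨β, ρ, hβ, hρ, heq, hρd⟩ := ih _ hlt' hφ' rfl
  refine ⟨β + C c * X ^ q ^ e, ρ, hβ.add (isLin_C_mul_X_pow c e), hρ, ?_, hρd⟩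
  rw [add_comp, mul_comp, C_comp, X_pow_comp]
  linear_combination heq

end Linearized

section SubspacePoly

variable {Fq F : Type*} [Field Fq] [Field F] [Algebra Fq F] [Finite F]

variable (Fq) in
noncomputable def subspacePoly (V : Submodule Fq F) : F[X] :=
  ∏ u ∈ (Set.toFinite (V : Set F)).toFinset, (X - C u)

theorem isMonicOfDegree_subspacePoly (V : Submodule Fq F) :
    IsMonicOfDegree (subspacePoly Fq V) (Nat.card V) :=
  ⟨by simp [subspacePoly, ← Nat.card_eq_card_finite_toFinset],
    monic_prod_of_monic _ _ fun u _ => monic_X_sub_C u⟩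

theorem eval_subspacePoly_eq_zero_iff {V : Submodule Fq F} {x : F} :
    (subspacePoly Fq V).eval x = 0 ↔ x ∈ V := by
  simp [subspacePoly, eval_prod, Finset.prod_eq_zero_iff, sub_eq_zero]

theorem eq_subspacePoly_of_isMonicOfDegree {V : Submodule Fq F} {P : F[X]}
    (hP : IsMonicOfDegree P (Nat.card V)) (hV : ∀ v ∈ V, P.eval v = 0) :
    P = subspacePoly Fq V := by
  have hS := isMonicOfDegree_subspacePoly V
  refine eq_of_monic_of_dvd_of_natDegree_le hS.monic hP.monic ?_
    (by rw [hP.natDegree_eq, hS.natDegree_eq])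
  rw [subspacePoly, Finset.prod_eq_multiset_prod,
    Multiset.prod_X_sub_C_dvd_iff_le_roots hP.ne_zero]
  exact Finset.val_le_iff_val_subset.2 fun u hu =>
    (mem_roots hP.ne_zero).2 (hV u ((Set.Finite.mem_toFinset _).1 hu))

theorem subspacePoly_bot : subspacePoly Fq (⊥ : Submodule Fq F) = X :=
  (eq_subspacePoly_of_isMonicOfDegree (by simpa using (isMonicOfDegree_X F)) (by simp)).symm

end SubspacePoly

section LinearizedSubspacePoly

variable {Fq F : Type*} [Field Fq] [Fintype Fq] [Field F] [Algebra Fq F] {p k : ℕ} [ExpChar F p]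

theorem algebraMap_pow_card (c : Fq) :
    algebraMap Fq F c ^ Fintype.card Fq = algebraMap Fq F c := by
  rw [← map_pow, FiniteField.pow_card]

def IsLin.toLinearMap (hq : Fintype.card Fq = p ^ k) {f : F[X]}
    (hf : IsLin (Fintype.card Fq) f) : F →ₗ[Fq] F where
  toFun := f.eval
  map_add' := hf.eval_add hq
  map_smul' c x := by
    rw [Algebra.smul_def, hf.eval_mul (algebraMap_pow_card c), RingHom.id_apply,
      Algebra.smul_def]

theorem IsLin.eval_eq_zero_of_mem_span (hq : Fintype.card Fq = p ^ k) {f : F[X]}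
    (hf : IsLin (Fintype.card Fq) f) {s : Set F} (hs : ∀ x ∈ s, f.eval x = 0) {x : F}
    (hx : x ∈ Submodule.span Fq s) : f.eval x = 0 :=
  (Submodule.span_le (p := LinearMap.ker (hf.toLinearMap hq)).2 hs) hx

variable [Finite F]

theorem natCard_sup_span_singleton {V : Submodule Fq F} {w : F} (hw : w ∉ V) :
    Nat.card ↥(V ⊔ Submodule.span Fq {w}) = Fintype.card Fq * Nat.card V := by
  rw [Module.natCard_eq_pow_finrank (K := Fq) (V := ↥(V ⊔ _)),
    Submodule.finrank_sup_span_singleton hw, pow_succ,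
    Module.natCard_eq_pow_finrank (K := Fq) (V := V), Nat.card_eq_fintype_card, mul_comm]

theorem subspacePoly_sup_span_singleton (hq : Fintype.card Fq = p ^ k) {V : Submodule Fq F}
    (hV : IsLin (Fintype.card Fq) (subspacePoly Fq V)) {w : F} (hw : w ∉ V) :
    subspacePoly Fq (V ⊔ Submodule.span Fq {w}) =
      (X ^ Fintype.card Fq - C ((subspacePoly Fq V).eval w ^ (Fintype.card Fq - 1)) * X).comp
        (subspacePoly Fq V) := by
  set q := Fintype.card Fq
  set t := (subspacePoly Fq V).eval w
  have hq1 : 1 < q := Fintype.one_lt_card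
  -- `Π_V (v + c • w) = c * t`, and `Y ^ q - t ^ (q - 1) * Y` vanishes exactly on `Fq * t`.
  refine (eq_subspacePoly_of_isMonicOfDegree ?_ ?_).symm
  · rw [natCard_sup_span_singleton hw]
    refine ((isMonicOfDegree_X_pow F q).sub ?_).comp Nat.card_pos.ne'
      (isMonicOfDegree_subspacePoly V)
    exact (natDegree_C_mul_le _ _).trans natDegree_X_le |>.trans_lt hq1
  · intro u hu
    obtain ⟨v, hv, y, hy, rfl⟩ := Submodule.mem_sup.1 hu
    obtain ⟨c, rfl⟩ := Submodule.mem_span_singleton.1 hy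
    have hvw : (subspacePoly Fq V).eval (v + c • w) = algebraMap Fq F c * t := by
      rw [hV.eval_add hq, eval_subspacePoly_eq_zero_iff.2 hv, zero_add, Algebra.smul_def,
        hV.eval_mul (algebraMap_pow_card c)]
    have hc : algebraMap Fq F c ^ q = algebraMap Fq F c := algebraMap_pow_card c
    have ht : t ^ q = t ^ (q - 1) * t := by rw [← pow_succ, Nat.sub_add_cancel hq1.le]
    simp only [eval_comp, eval_sub, eval_pow, eval_mul, eval_C, eval_X, hvw, mul_pow, hc, ht]
    ring

theorem isLin_subspacePoly (hq : Fintype.card Fq = p ^ k) (V : Submodule Fq F) :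
    IsLin (Fintype.card Fq) (subspacePoly Fq V) := by
  classical
  obtain ⟨s, rfl⟩ : ∃ s : Finset F, Submodule.span Fq (s : Set F) = V :=
    ⟨(Set.toFinite (V : Set F)).toFinset, by simp⟩
  induction s using Finset.induction_on with
  | empty =>
    rw [Finset.coe_empty, Submodule.span_empty, subspacePoly_bot]
    exact isLin_X
  | insert w s _ ih =>
    rw [Finset.coe_insert, Submodule.span_insert, sup_comm]
    by_cases hw : w ∈ Submodule.span Fq (s : Set F)
    · rwa [sup_eq_left.2 ((Submodule.span_singleton_le_iff_mem _ _).2 hw)]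
    rw [subspacePoly_sup_span_singleton hq ih hw]
    exact (isLin_X_pow_sub_C_mul_X _).comp hq ih

theorem IsLin.exists_eq_comp_subspacePoly (hq : Fintype.card Fq = p ^ k) {φ : F[X]}
    (hφ : IsLin (Fintype.card Fq) φ) {V : Submodule Fq F} (hV : ∀ v ∈ V, φ.eval v = 0) :
    ∃ β : F[X], IsLin (Fintype.card Fq) β ∧ φ = β.comp (subspacePoly Fq V) := by
  obtain ⟨β, ρ, hβ, -, rfl, hρ⟩ := hφ.exists_eq_comp_add hq Fintype.one_lt_card
    (isLin_subspacePoly hq V) (isMonicOfDegree_subspacePoly V).monic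
  suffices ρ = 0 by exact ⟨β, hβ, by rw [this, add_zero]⟩
  refine eq_zero_of_natDegree_lt_card_of_eval_eq_zero' ρ (Set.toFinite (V : Set F)).toFinset
    (fun v hv => ?_) ?_
  · have hv : v ∈ V := (Set.Finite.mem_toFinset _).1 hv
    simpa [eval_comp, eval_subspacePoly_eq_zero_iff.2 hv, hβ.eval_zero hq] using hV v hv
  · rw [(isMonicOfDegree_subspacePoly V).natDegree_eq] at hρ
    exact hρ.trans_eq (Nat.card_eq_card_finite_toFinset _)

end LinearizedSubspacePoly

theorem stmt12_general {Fq F : Type*} [Field Fq] [Fintype Fq] [Field F] [Fintype F] [Algebra Fq F]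
    {n : ℕ} (g : Fin n → F) (r : Fin n → F)
    (Pig : Polynomial F)
    (hPig : Pig =
      ∏ u ∈ (Set.toFinite ((Submodule.span Fq (Set.range g) : Submodule Fq F) : Set F)).toFinset,
        (X - C u))
    (Lam : Polynomial F) (hLamLin : IsLin (Fintype.card Fq) Lam)
    (hLam : ∀ i, Lam.eval (g i) = r i)
    (f h : Polynomial F) (hf : IsLin (Fintype.card Fq) f) (hh : IsLin (Fintype.card Fq) h) :
    (∀ i, f.eval (g i) + h.eval (r i) = 0) ↔
      ∃ β γ : Polynomial F, IsLin (Fintype.card Fq) β ∧ IsLin (Fintype.card Fq) γ ∧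
        f = β.comp Pig - γ.comp Lam ∧ h = γ := by
  obtain ⟨p, _⟩ := CharP.exists Fq
  obtain ⟨k, hp, hq⟩ := FiniteField.card Fq p
  have : CharP F p := charP_of_injective_algebraMap' Fq p
  have : ExpChar F p := .prime hp
  replace hPig : Pig = subspacePoly Fq (Submodule.span Fq (Set.range g)) := hPig
  constructor
  · intro hfh
    have hφ : IsLin (Fintype.card Fq) (f + h.comp Lam) := hf.add (hh.comp hq hLamLin)
    have hφg : ∀ x ∈ Set.range g, (f + h.comp Lam).eval x = 0 := by
      rintro _ ⟨i, rfl⟩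
      simpa [eval_comp, hLam] using hfh i
    obtain ⟨β, hβ, hβφ⟩ :=
      hφ.exists_eq_comp_subspacePoly hq fun _ hv => hφ.eval_eq_zero_of_mem_span hq hφg hv
    exact ⟨β, h, hβ, hh, by rw [hPig, ← hβφ]; ring, rfl⟩
  · rintro ⟨β, γ, hβ, -, rfl, rfl⟩ i
    have hg : Pig.eval (g i) = 0 :=
      hPig ▸ eval_subspacePoly_eq_zero_iff.2 (Submodule.subset_span (Set.mem_range_self i))
    simp [eval_comp, hg, hβ.eval_zero hq, hLam]

/-- A pair `(f, h)` of `q`-linearized polynomials satisfies `f(g i) + h(r i) = 0` for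
all `i` iff there are `q`-linearized `β, γ` with `f = β ∘ Π_g - γ ∘ Λ_{g,r}` and
`h = γ`, where `Π_g` is the `q`-annihilator polynomial of the span of the `g i` and
`Λ_{g,r}` is the `q`-Lagrange polynomial (the `q`-linearized interpolant of `q`-degree
at most `n - 1` with `Λ(g i) = r i`). -/
theorem stmt12 {Fq F : Type*} [Field Fq] [Fintype Fq] [Field F] [Fintype F] [Algebra Fq F]
    {n : ℕ} (g : Fin n → F) (hg : LinearIndependent Fq g) (r : Fin n → F)
    (Pig : Polynomial F)
    (hPig : Pig =
      ∏ u ∈ (Set.toFinite ((Submodule.span Fq (Set.range g) : Submodule Fq F) : Set F)).toFinset,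
        (X - C u))
    (Lam : Polynomial F) (hLamLin : IsLin (Fintype.card Fq) Lam)
    (hLamDeg : Lam.natDegree < Fintype.card Fq ^ n)
    (hLam : ∀ i, Lam.eval (g i) = r i)
    (f h : Polynomial F) (hf : IsLin (Fintype.card Fq) f) (hh : IsLin (Fintype.card Fq) h) :
    (∀ i, f.eval (g i) + h.eval (r i) = 0) ↔
      ∃ β γ : Polynomial F, IsLin (Fintype.card Fq) β ∧ IsLin (Fintype.card Fq) γ ∧
        f = β.comp Pig - γ.comp Lam ∧ h = γ :=
  stmt12_general g r Pig hPig Lam hLamLin hLam f h hf hh
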